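/- (Theorem 1, stated conditionally on the per-frame drift-plus-penalty inequality that the ENSRA algorithm guarantees.) Let T ≥ 1, L ≥ 1, V > 0, η > 0, B₂ ≥ 0 and P_max > 0. Let Q_l : ℕ → ℝ satisfy Q_l(t) ≥ 0 for all t and Q_l(0) = 0 for all l ∈ {1,…,L}, let P : ℕ → ℝ satisfy 0 ≤ P(t) ≤ P_max for all t, and let Pfun : [0, η] → ℝ satisfy 0 ≤ Pfun(ε) ≤ P_max. Suppose that for every ε ∈ [0, η] and every k ∈ ℕ: (1/2)·∑_{l=1}^{L} Q_l((k+1)T)² − (1/2)·∑_{l=1}^{L} Q_l(kT)² + V·∑_{τ=kT}^{(k+1)T−1} P(τ) ≤ B₂·T + V·T·Pfun(ε) − ε·T·∑_{l=1}^{L} Q_l(kT). Then: (a) limsup_{K→∞} (1/(KT))·∑_{t=0}^{KT−1} P(t) ≤ Pfun(0) + B₂/V, and (b) limsup_{K→∞} (1/K)·∑_{k=0}^{K−1} ∑_{l=1}^{L} Q_l(kT) ≤ (B₂ + V·P_max)/η. -/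

import Mathlib

/-!
Summing the per-frame inequality over the first `K` frames telescopes the Lyapunov term
`½ ∑ₗ Q_l(kT)²`, which starts at `0` and stays nonnegative, so it can be dropped:
`V ∑_{t<KT} P(t) + ε T ∑_{k<K} ∑ₗ Q_l(kT) ≤ K (B₂ T + V T Pfun(ε))`.
Taking `ε = 0` bounds the average power, and taking `ε = η` (with `Pfun(η) ≤ P_max` and
`P ≥ 0`) bounds the average queue backlog; both bounds hold for every `K ≥ 1`.
-/

open Filter Finset

theorem sum_range_sum_Ico_mul {M : Type*} [AddCommMonoid M] (f : ℕ → M) (T K : ℕ) :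
    ∑ k ∈ range K, ∑ τ ∈ Ico (k * T) ((k + 1) * T), f τ =
      ∑ t ∈ range (K * T), f t := by
  induction K with
  | zero => simp
  | succ K ih =>
    rw [sum_range_succ, ih, sum_range_add_sum_Ico f (Nat.mul_le_mul_right T K.le_succ)]

theorem sum_range_le_of_drift_add_le {Φ a : ℕ → ℝ} {c : ℝ} (hΦ0 : Φ 0 = 0)
    (hΦ : ∀ k, 0 ≤ Φ k) (hdrift : ∀ k, Φ (k + 1) - Φ k + a k ≤ c) (K : ℕ) :
    ∑ k ∈ range K, a k ≤ K * c := by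
  have hsum := sum_le_sum fun k (_ : k ∈ range K) => hdrift k
  rw [sum_add_distrib, sum_range_sub, sum_const, card_range, nsmul_eq_mul, hΦ0] at hsum
  linarith [hΦ K]

theorem sum_add_sum_le_of_drift_plus_penalty_le {T L : ℕ} {V ε c : ℝ} {Q : ℕ → ℕ → ℝ}
    {P : ℕ → ℝ} (hQ0 : ∀ l, Q l 0 = 0)
    (hdpp : ∀ k : ℕ,
      (1 / 2) * ∑ l ∈ range L, (Q l ((k + 1) * T)) ^ 2
        - (1 / 2) * ∑ l ∈ range L, (Q l (k * T)) ^ 2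
        + V * ∑ τ ∈ Ico (k * T) ((k + 1) * T), P τ
      ≤ c - ε * T * ∑ l ∈ range L, Q l (k * T)) (K : ℕ) :
    V * ∑ t ∈ range (K * T), P t + ε * T * ∑ k ∈ range K, ∑ l ∈ range L, Q l (k * T)
      ≤ K * c := by
  have := sum_range_le_of_drift_add_le (Φ := fun k => (1 / 2) * ∑ l ∈ range L, Q l (k * T) ^ 2)
    (a := fun k => V * ∑ τ ∈ Ico (k * T) ((k + 1) * T), P τ
      + ε * T * ∑ l ∈ range L, Q l (k * T)) (c := c)
    (by simp [hQ0]) (fun k => by positivity) (fun k => by linarith [hdpp k]) K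
  rwa [sum_add_distrib, ← mul_sum, ← mul_sum, sum_range_sum_Ico_mul] at this

theorem limsup_div_mul_le {ι : Type*} {l : Filter ι} [l.NeBot] {a S : ι → ℝ} {c : ℝ}
    (ha : ∀ᶠ i in l, 0 < a i) (hS : ∀ i, 0 ≤ S i) (hle : ∀ i, S i ≤ a i * c) :
    limsup (fun i => 1 / a i * S i) l ≤ c := by
  have hbound : ∀ᶠ i in l, 0 ≤ 1 / a i * S i ∧ 1 / a i * S i ≤ c := by
    filter_upwards [ha] with i hai
    rw [one_div, inv_mul_le_iff₀ hai]
    exact ⟨mul_nonneg (inv_nonneg.2 hai.le) (hS i), hle i⟩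
  exact limsup_le_of_le (isCoboundedUnder_le_of_eventually_le l (hbound.mono fun _ h => h.1))
    (hbound.mono fun _ h => h.2)

theorem theorem1_ENSRA_general
    (T L : ℕ) (hT : 1 ≤ T)
    (V η B2 Pmax : ℝ) (hV : 0 < V) (hη : 0 < η)
    (Q : ℕ → ℕ → ℝ) (hQnonneg : ∀ l t, 0 ≤ Q l t) (hQ0 : ∀ l, Q l 0 = 0)
    (P : ℕ → ℝ) (hP : ∀ t, 0 ≤ P t ∧ P t ≤ Pmax)
    (Pfun : ℝ → ℝ) (hPfun : ∀ ε ∈ Set.Icc (0 : ℝ) η, 0 ≤ Pfun ε ∧ Pfun ε ≤ Pmax)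
    (hdpp : ∀ ε ∈ Set.Icc (0 : ℝ) η, ∀ k : ℕ,
      (1 / 2) * ∑ l ∈ Finset.range L, (Q l ((k + 1) * T)) ^ 2
        - (1 / 2) * ∑ l ∈ Finset.range L, (Q l (k * T)) ^ 2
        + V * ∑ τ ∈ Finset.Ico (k * T) ((k + 1) * T), P τ
      ≤ B2 * T + V * T * Pfun ε - ε * T * ∑ l ∈ Finset.range L, Q l (k * T)) :
    Filter.limsup
        (fun K : ℕ => (1 / ((K : ℝ) * T)) * ∑ t ∈ Finset.range (K * T), P t)
        Filter.atTop
      ≤ Pfun 0 + B2 / V ∧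
    Filter.limsup
        (fun K : ℕ => (1 / (K : ℝ)) *
          ∑ k ∈ Finset.range K, ∑ l ∈ Finset.range L, Q l (k * T))
        Filter.atTop
      ≤ (B2 + V * Pmax) / η := by
  have hT0 : (0 : ℝ) < T := by exact_mod_cast hT
  have hPsum : ∀ n, 0 ≤ ∑ t ∈ range n, P t := fun n => sum_nonneg fun t _ => (hP t).1
  have hQsum : ∀ K, 0 ≤ ∑ k ∈ range K, ∑ l ∈ range L, Q l (k * T) :=
    fun K => sum_nonneg fun k _ => sum_nonneg fun l _ => hQnonneg l _
  have hK : ∀ᶠ K : ℕ in atTop, (0 : ℝ) < K := by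
    filter_upwards [eventually_gt_atTop 0] with K hK
    exact_mod_cast hK
  have hKT : ∀ᶠ K : ℕ in atTop, (0 : ℝ) < K * T := hK.mono fun K hK => mul_pos hK hT0
  have hsummed (ε : ℝ) (hε : ε ∈ Set.Icc 0 η) :=
    sum_add_sum_le_of_drift_plus_penalty_le hQ0 (hdpp ε hε)
  refine ⟨limsup_div_mul_le hKT (fun K => hPsum _) fun K => ?_,
    limsup_div_mul_le hK hQsum fun K => ?_⟩
  · have h := hsummed 0 ⟨le_rfl, hη.le⟩ K
    rw [zero_mul, zero_mul, add_zero] at h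
    rw [← mul_le_mul_iff_of_pos_left hV]
    calc V * ∑ t ∈ range (K * T), P t ≤ K * (B2 * T + V * T * Pfun 0) := h
      _ = V * (K * T * (Pfun 0 + B2 / V)) := by field_simp; ring
  · have h := hsummed η ⟨hη.le, le_rfl⟩ K
    have hPfunη : V * T * Pfun η ≤ V * T * Pmax :=
      mul_le_mul_of_nonneg_left (hPfun η ⟨hη.le, le_rfl⟩).2 (by positivity)
    rw [← mul_le_mul_iff_of_pos_left (mul_pos hη hT0)]
    calc η * T * ∑ k ∈ range K, ∑ l ∈ range L, Q l (k * T)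
        ≤ K * (B2 * T + V * T * Pmax) := by
          linarith [mul_nonneg hV.le (hPsum (K * T)),
            mul_le_mul_of_nonneg_left hPfunη K.cast_nonneg]
      _ = η * T * (K * ((B2 + V * Pmax) / η)) := by field_simp

/-- Theorem 1, stated conditionally on the per-frame drift-plus-penalty inequality
guaranteed by the ENSRA algorithm: (a) the time average power is within `B₂/V` of
`Pfun 0`, and (b) the frame-start average total queue length is at most
`(B₂ + V P_max)/η`. -/
theorem theorem1_ENSRA
    (T L : ℕ) (hT : 1 ≤ T) (hL : 1 ≤ L)
    (V η B2 Pmax : ℝ) (hV : 0 < V) (hη : 0 < η) (hB2 : 0 ≤ B2) (hPmax : 0 < Pmax)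
    (Q : ℕ → ℕ → ℝ) (hQnonneg : ∀ l t, 0 ≤ Q l t) (hQ0 : ∀ l, Q l 0 = 0)
    (P : ℕ → ℝ) (hP : ∀ t, 0 ≤ P t ∧ P t ≤ Pmax)
    (Pfun : ℝ → ℝ) (hPfun : ∀ ε ∈ Set.Icc (0 : ℝ) η, 0 ≤ Pfun ε ∧ Pfun ε ≤ Pmax)
    (hdpp : ∀ ε ∈ Set.Icc (0 : ℝ) η, ∀ k : ℕ,
      (1 / 2) * ∑ l ∈ Finset.range L, (Q l ((k + 1) * T)) ^ 2
        - (1 / 2) * ∑ l ∈ Finset.range L, (Q l (k * T)) ^ 2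
        + V * ∑ τ ∈ Finset.Ico (k * T) ((k + 1) * T), P τ
      ≤ B2 * T + V * T * Pfun ε - ε * T * ∑ l ∈ Finset.range L, Q l (k * T)) :
    Filter.limsup
        (fun K : ℕ => (1 / ((K : ℝ) * T)) * ∑ t ∈ Finset.range (K * T), P t)
        Filter.atTop
      ≤ Pfun 0 + B2 / V ∧
    Filter.limsup
        (fun K : ℕ => (1 / (K : ℝ)) *
          ∑ k ∈ Finset.range K, ∑ l ∈ Finset.range L, Q l (k * T))
        Filter.atTop
      ≤ (B2 + V * Pmax) / η :=
  theorem1_ENSRA_general T L hT V η B2 Pmax hV hη Q hQnonneg hQ0 P hP Pfun hPfun hdpp
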